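/- arXiv:2502.01110 — 7 statements merged into one kernel-verified Lean document; each statement's English description precedes it below -/
import Mathlib

section
/- For any n-variable Boolean function f, the algebraic immunity AI(f) is at most ⌈n/2⌉. -/
/-!
Over `F₂` the ANF transform is an involution (Möbius inversion on the Boolean lattice, where the
interval `[β, α]` has odd size only when `β = α`), so a Boolean function may be prescribed through
its ANF coefficients. Functions of degree at most `d = ⌈n/2⌉` thus form a space of dimension
`#{α | wtv α ≤ d} > 2ⁿ⁻¹`, while one of `f`, `1 ⊕ f` has support of size at most `2ⁿ⁻¹`; a nonzero
function of degree at most `d` vanishing on that support annihilates it.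
-/

abbrev BF (n : ℕ) := (Fin n → ZMod 2) → ZMod 2

/-- Hamming weight of a vector in `F₂ⁿ`. -/
def wtv {n : ℕ} (x : Fin n → ZMod 2) : ℕ :=
  (Finset.univ.filter fun i => x i = 1).card

/-- ANF coefficient `a_α = ⊕_{z ≤ α} f(z)`. -/
def anf {n : ℕ} (f : BF n) (α : Fin n → ZMod 2) : ZMod 2 :=
  ∑ z ∈ Finset.univ.filter (fun z : Fin n → ZMod 2 => ∀ i, z i = 1 → α i = 1), f z

/-- Algebraic degree: the maximum weight of `α` with nonzero ANF coefficient
(0 for the zero function). -/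
def degBF {n : ℕ} (f : BF n) : ℕ :=
  (Finset.univ.filter fun α => anf f α ≠ 0).sup wtv

/-- Algebraic immunity: minimum degree of a nonzero annihilator of `f` or of `1 ⊕ f`. -/
noncomputable def AI {n : ℕ} (f : BF n) : ℕ :=
  sInf {d : ℕ | ∃ g : BF n, g ≠ 0 ∧ degBF g = d ∧
    ((∀ x, g x * f x = 0) ∨ (∀ x, g x * (1 + f x) = 0))}

open Finset

variable {n : ℕ}

theorem card_filter_eq_one_add_card_filter_one_add_eq_one {ι : Type*} [Fintype ι]
    (u : ι → ZMod 2) : #{i | u i = 1} + #{i | 1 + u i = 1} = Fintype.card ι := by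
  have h : ∀ i, 1 + u i = 1 ↔ ¬u i = 1 := fun i => by generalize u i = a; decide +revert
  simp only [h]
  exact card_filter_add_card_filter_not _

theorem wtv_le (α : Fin n → ZMod 2) : wtv α ≤ n :=
  (card_filter_le _ _).trans_eq (card_fin n)

theorem wtv_one_add (α : Fin n → ZMod 2) : wtv (1 + α) = n - wtv α := by
  have h := card_filter_eq_one_add_card_filter_one_add_eq_one α
  rw [Fintype.card_fin] at h
  unfold wtv
  simp only [Pi.add_apply, Pi.one_apply]
  omega

theorem exists_wtv_eq {k : ℕ} (hk : k ≤ n) : ∃ α : Fin n → ZMod 2, wtv α = k := by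
  obtain ⟨s, -, hs⟩ := exists_subset_card_eq (s := (univ : Finset (Fin n))) (by simpa using hk)
  exact ⟨fun i => if i ∈ s then 1 else 0, by simp [wtv, hs]⟩

theorem two_pow_lt_two_mul_card_wtv_le_half :
    2 ^ n < 2 * #{α : Fin n → ZMod 2 | wtv α ≤ (n + 1) / 2} := by
  set d := (n + 1) / 2
  set A : Finset (Fin n → ZMod 2) := {α | wtv α ≤ d} with hA
  obtain ⟨β, hβ⟩ := exists_wtv_eq (show d ≤ n by omega)
  have hβA : β ∈ A := by simp [A, hβ]
  -- complementation maps the heavy vectors injectively to light ones, missing `β`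
  have hheavy : #{α : Fin n → ZMod 2 | ¬wtv α ≤ d} ≤ #(A.erase β) := by
    refine card_le_card_of_injOn (1 + ·) (fun α hα => ?_) (add_right_injective 1).injOn
    have hlight : wtv (1 + α) < d := by
      have := wtv_le α
      simp only [coe_filter, mem_univ, true_and, Set.mem_ofPred_eq] at hα
      rw [wtv_one_add]
      omega
    rw [coe_erase, Set.mem_sdiff, Set.mem_singleton_iff, mem_coe]
    exact ⟨by simpa [A] using hlight.le,
      fun h => by rw [show 1 + α = β from h, hβ] at hlight; omega⟩
  have htotal := card_filter_add_card_filter_not (s := univ) (fun α : Fin n → ZMod 2 => wtv α ≤ d)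
  rw [← hA, card_univ, Fintype.card_fun, ZMod.card, Fintype.card_fin] at htotal
  rw [card_erase_of_mem hβA] at hheavy
  have := card_pos.2 ⟨β, hβA⟩
  omega

theorem natCast_card_between (β α : Fin n → ZMod 2) :
    (#{z : Fin n → ZMod 2 | (∀ i, β i = 1 → z i = 1) ∧ ∀ i, z i = 1 → α i = 1} : ZMod 2) =
      if β = α then 1 else 0 := by
  rw [natCast_card_filter]
  -- the count factors over the coordinates
  calc _ = ∑ z : Fin n → ZMod 2,
          ∏ i, if (β i = 1 → z i = 1) ∧ (z i = 1 → α i = 1) then (1 : ZMod 2) else 0 := by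
        simp only [prod_boole, mem_univ, true_implies, forall_and]
    _ = ∏ i, ∑ a : ZMod 2, if (β i = 1 → a = 1) ∧ (a = 1 → α i = 1) then 1 else 0 := by
        rw [Fintype.prod_sum]
    _ = ∏ i, if β i = α i then 1 else 0 := by
        congr! 1 with i
        generalize β i = b
        generalize α i = a
        decide +revert
    _ = if β = α then 1 else 0 := by simp only [prod_boole, mem_univ, true_implies, funext_iff]

theorem anf_anf (f : BF n) : anf (anf f) = f := by
  funext α
  unfold anf
  rw [sum_comm' (t' := univ)
    (s' := fun w => {z | (∀ i, w i = 1 → z i = 1) ∧ ∀ i, z i = 1 → α i = 1})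
    (fun z w => by simp only [mem_filter, mem_univ, true_and]; tauto)]
  simp only [sum_const, nsmul_eq_mul, natCast_card_between, ite_mul, one_mul, zero_mul,
    sum_ite_eq', mem_univ, if_true]

def anfLinearMap : BF n →ₗ[ZMod 2] BF n where
  toFun := anf
  map_add' f g := by funext α; simp [anf, sum_add_distrib]
  map_smul' c f := by funext α; simp [anf, mul_sum]

theorem degBF_le_iff {f : BF n} {d : ℕ} : degBF f ≤ d ↔ ∀ α, anf f α ≠ 0 → wtv α ≤ d := by
  simp [degBF]

theorem exists_ne_zero_degBF_le_of_card_lt {d : ℕ} (S : Finset (Fin n → ZMod 2))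
    (hS : #S < #{α : Fin n → ZMod 2 | wtv α ≤ d}) :
    ∃ g : BF n, g ≠ 0 ∧ degBF g ≤ d ∧ ∀ x ∈ S, g x = 0 := by
  set T : Finset (Fin n → ZMod 2) := {α | ¬wtv α ≤ d} with hT
  -- a nonzero `c` in the kernel of `L` yields `g = anf c`, whose ANF is `c`
  let L : BF n →ₗ[ZMod 2] (S → ZMod 2) × (T → ZMod 2) :=
    (LinearMap.funLeft _ _ Subtype.val ∘ₗ anfLinearMap).prod (LinearMap.funLeft _ _ Subtype.val)
  have hrank : Module.finrank (ZMod 2) ((S → ZMod 2) × (T → ZMod 2)) <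
      Module.finrank (ZMod 2) (BF n) := by
    simp only [Module.finrank_prod, Module.finrank_fintype_fun_eq_card, Fintype.card_coe]
    rw [← card_univ,
      ← card_filter_add_card_filter_not (s := univ) (fun α : Fin n → ZMod 2 => wtv α ≤ d), ← hT]
    omega
  obtain ⟨c, hcL, hc⟩ := (Submodule.ne_bot_iff _).1 (LinearMap.ker_ne_bot_of_finrank_lt hrank)
  have hcL : L c = 0 := hcL
  have hvanish : ∀ x : S, anf c x = 0 := fun x => congrFun (congrArg Prod.fst hcL) x
  have hlow : ∀ α : T, c α = 0 := fun α => congrFun (congrArg Prod.snd hcL) α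
  refine ⟨anf c, fun h => hc ?_, degBF_le_iff.2 fun α hα => ?_, fun x hx => hvanish ⟨x, hx⟩⟩
  · rw [← anf_anf c, h]
    exact anfLinearMap.map_zero
  · rw [anf_anf] at hα
    by_contra hheavy
    exact hα (hlow ⟨α, by simpa [T] using hheavy⟩)

theorem exists_annihilator_of_card_lt {d : ℕ} (h : BF n)
    (hcard : #{x | h x = 1} < #{α : Fin n → ZMod 2 | wtv α ≤ d}) :
    ∃ g : BF n, g ≠ 0 ∧ degBF g ≤ d ∧ ∀ x, g x * h x = 0 := by
  obtain ⟨g, hg, hdeg, hvanish⟩ := exists_ne_zero_degBF_le_of_card_lt _ hcard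
  refine ⟨g, hg, hdeg, fun x => ?_⟩
  obtain hx | hx : h x = 0 ∨ h x = 1 := by generalize h x = a; decide +revert
  · rw [hx, mul_zero]
  · rw [hvanish x (by simpa using hx), zero_mul]

/-- For any n-variable Boolean function f, the algebraic immunity is at most ⌈n/2⌉. -/
theorem AI_le_half {n : ℕ} (f : BF n) : AI f ≤ (n + 1) / 2 := by
  have hsplit := card_filter_eq_one_add_card_filter_one_add_eq_one f
  rw [Fintype.card_fun, ZMod.card, Fintype.card_fin] at hsplit
  have hlarge := two_pow_lt_two_mul_card_wtv_le_half (n := n)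
  obtain ⟨g, hg, hdeg, hann⟩ : ∃ g : BF n, g ≠ 0 ∧ degBF g ≤ (n + 1) / 2 ∧
      ((∀ x, g x * f x = 0) ∨ ∀ x, g x * (1 + f x) = 0) := by
    rcases le_total #{x | f x = 1} #{x | 1 + f x = 1} with hle | hle
    · obtain ⟨g, hg, hdeg, hann⟩ := exists_annihilator_of_card_lt (d := (n + 1) / 2) f (by omega)
      exact ⟨g, hg, hdeg, .inl hann⟩
    · obtain ⟨g, hg, hdeg, hann⟩ := exists_annihilator_of_card_lt (d := (n + 1) / 2) (1 + f)
        (by simp only [Pi.add_apply, Pi.one_apply]; omega)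
      exact ⟨g, hg, hdeg, .inr hann⟩
  exact (Nat.sInf_le ⟨g, hg, rfl, hann⟩ : AI f ≤ degBF g).trans hdeg
end

section
/- For any n-variable Boolean function f, if g and h are Boolean functions with g·f = h and h ≠ 0, then deg(h) ≥ AI(f). Moreover, if additionally 1 ≤ deg(g) < AI(f), then deg(g) + deg(h) ≥ 1 + AI(f). -/
lemma mul_mul_one_add_eq_zero_of_isIdempotentElem {R : Type*} [CommRing R] [CharP R 2]
    {b : R} (hb : IsIdempotentElem b) (a : R) : a * b * (1 + b) = 0 := by
  rw [mul_assoc, mul_one_add, hb.eq, CharTwo.add_self_eq_zero, mul_zero]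

lemma AI_le_degBF_of_annihilates_one_add {n : ℕ} {f g : BF n} (hg : g ≠ 0)
    (hann : ∀ x, g x * (1 + f x) = 0) : AI f ≤ degBF g :=
  Nat.sInf_le ⟨g, hg, rfl, Or.inr hann⟩

/-- If g·f = h and h ≠ 0 then deg h ≥ AI f; moreover if 1 ≤ deg g < AI f then
deg g + deg h ≥ 1 + AI f. -/
theorem deg_of_multiple {n : ℕ} (f g h : BF n)
    (hmul : ∀ x, g x * f x = h x) (hne : h ≠ 0) :
    AI f ≤ degBF h ∧
      (1 ≤ degBF g → degBF g < AI f → 1 + AI f ≤ degBF g + degBF h) := by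
  have hidem (b : ZMod 2) : IsIdempotentElem b := by
    rw [IsIdempotentElem, ← sq]
    exact ZMod.pow_card b
  have hAI : AI f ≤ degBF h := AI_le_degBF_of_annihilates_one_add hne fun x => by
    rw [← hmul x]
    exact mul_mul_one_add_eq_zero_of_isIdempotentElem (hidem (f x)) (g x)
  exact ⟨hAI, fun hg _ => by omega⟩
end

section
/- Let m ≥ 1, π: F₂^m → F₂^m a bijection with coordinate functions π₁,…,π_m, and h an m-variable Boolean function. Then the Maiorana-McFarland function MM_{2m}(X,Y) = ⟨π(X),Y⟩ ⊕ h(X) is bent, i.e. all its Walsh transform values equal ±2^m. -/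
/-- Inner product over F₂. -/
def ip {m : ℕ} (x y : Fin m → ZMod 2) : ZMod 2 := ∑ i, x i * y i

def χ (u : ZMod 2) : ℤ := (-1) ^ u.val

lemma χ_add (u v : ZMod 2) : χ (u + v) = χ u * χ v := by
  revert u v; decide

lemma χ_one : χ 1 = -1 := rfl

lemma abs_χ (u : ZMod 2) : |χ u| = 1 := by
  revert u; decide

section InnerProduct

variable {m : ℕ}

lemma ip_add_left (x x' y : Fin m → ZMod 2) : ip (x + x') y = ip x y + ip x' y := by
  simp only [ip, Pi.add_apply, add_mul, Finset.sum_add_distrib]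

lemma ip_add_right (c y y' : Fin m → ZMod 2) : ip c (y + y') = ip c y + ip c y' := by
  simp only [ip, Pi.add_apply, mul_add, Finset.sum_add_distrib]

lemma ip_zero_left (y : Fin m → ZMod 2) : ip 0 y = 0 := by
  simp [ip]

lemma ip_single_right (c : Fin m → ZMod 2) (i : Fin m) : ip c (Pi.single i 1) = c i := by
  simp [ip, Pi.single_apply]

lemma sum_χ_ip (c : Fin m → ZMod 2) :
    ∑ y : Fin m → ZMod 2, χ (ip c y) = if c = 0 then 2 ^ m else 0 := by
  split_ifs with hc
  · simp [hc, ip_zero_left, χ, Finset.card_univ]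
  obtain ⟨i, hi⟩ := Function.ne_iff.mp hc
  have hci : c i = 1 := (show ∀ u : ZMod 2, u ≠ 0 → u = 1 by decide) _ hi
  -- translating `y` by the `i`-th unit vector flips every sign
  have hflip : ∀ y, χ (ip c (Pi.single i 1 + y)) = -χ (ip c y) := fun y => by
    rw [ip_add_right, χ_add, ip_single_right, hci, χ_one, neg_one_mul]
  have hshift : ∑ y, χ (ip c (Pi.single i 1 + y)) = ∑ y, χ (ip c y) :=
    Fintype.sum_equiv (Equiv.addLeft (Pi.single i 1)) _ _ fun _ => rfl
  simp only [hflip, Finset.sum_neg_distrib] at hshift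
  linarith

end InnerProduct

lemma walsh_MM_inner_sum {m : ℕ} (π : (Fin m → ZMod 2) → (Fin m → ZMod 2)) (h : BF m)
    (a b x : Fin m → ZMod 2) :
    ∑ y : Fin m → ZMod 2, (-1 : ℤ) ^ ((ip (π x) y + h x + (ip a x + ip b y)).val)
      = χ (h x + ip a x) * if π x = b then 2 ^ m else 0 := by
  have hcond : π x + b = 0 ↔ π x = b := by
    rw [add_eq_zero_iff_eq_neg, show -b = b from funext fun i => CharTwo.neg_eq (b i)]
  simp only [← hcond, ← sum_χ_ip, Finset.mul_sum]
  refine Finset.sum_congr rfl fun y _ => ?_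
  rw [← χ_add, ip_add_left]
  congr 2
  ring

lemma walsh_MM_eq {m : ℕ} {π : (Fin m → ZMod 2) → (Fin m → ZMod 2)} {h : BF m}
    {a b x₀ : Fin m → ZMod 2} (hπ : Function.Injective π) (hx₀ : π x₀ = b) :
    ∑ x : Fin m → ZMod 2, ∑ y : Fin m → ZMod 2,
        (-1 : ℤ) ^ ((ip (π x) y + h x + (ip a x + ip b y)).val)
      = χ (h x₀ + ip a x₀) * 2 ^ m := by
  simp only [walsh_MM_inner_sum, mul_ite, mul_zero, ← hx₀, hπ.eq_iff,
    Finset.sum_ite_eq', Finset.mem_univ, if_true]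

theorem MM_bent_general (m : ℕ)
    (π : (Fin m → ZMod 2) → (Fin m → ZMod 2)) (hπ : Function.Bijective π)
    (h : BF m) (a b : Fin m → ZMod 2) :
    |∑ x : Fin m → ZMod 2, ∑ y : Fin m → ZMod 2,
        ((-1 : ℤ) ^ ((ip (π x) y + h x + (ip a x + ip b y)).val))| = 2 ^ m := by
  obtain ⟨x₀, hx₀⟩ := hπ.surjective b
  rw [walsh_MM_eq hπ.injective hx₀, abs_mul, abs_χ, one_mul, abs_pow, abs_two]

/-- The Maiorana-McFarland function ⟨π(X),Y⟩ ⊕ h(X) is bent: all Walsh transform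
values equal ±2^m. -/
theorem MM_bent (m : ℕ) (hm : 1 ≤ m)
    (π : (Fin m → ZMod 2) → (Fin m → ZMod 2)) (hπ : Function.Bijective π)
    (h : BF m) (a b : Fin m → ZMod 2) :
    |∑ x : Fin m → ZMod 2, ∑ y : Fin m → ZMod 2,
        ((-1 : ℤ) ^ ((ip (π x) y + h x + (ip a x + ip b y)).val))| = 2 ^ m :=
  MM_bent_general m π hπ h a b
end

section
/- Let g(X,Y) be a nonzero annihilator of MM_{2m}(X,Y) = ⟨π(X),Y⟩ ⊕ h(X) (or of its complement). Then there exists ω* ∈ F₂^m such that deg(g) ≥ wt(ω*) + AI(⟨ω*, π(X)⟩ ⊕ h(X)). Consequently AI(MM_{2m}) ≥ wt(ω*) + AI(⟨ω*,π(X)⟩ ⊕ h(X)) for some ω*. -/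
/-- The Maiorana-McFarland function MM_{2m}(X,Y) = ⟨π(X),Y⟩ ⊕ h(X), viewed as a
Boolean function of the 2m variables (X,Y). -/
def MM (m : ℕ) (π : (Fin m → ZMod 2) → (Fin m → ZMod 2)) (h : BF m) : BF (m + m) :=
  fun u => ip (π fun i => u (Fin.castAdd m i)) (fun i => u (Fin.natAdd m i))
    + h (fun i => u (Fin.castAdd m i))

lemma z2 : ∀ a : ZMod 2, a = 0 ∨ a = 1 := by decide

lemma wtv_lt_of_le_of_ne {n : ℕ} {w z : Fin n → ZMod 2}
    (hle : ∀ i, w i = 1 → z i = 1) (hne : w ≠ z) : wtv w < wtv z := by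
  apply Finset.card_lt_card
  constructor
  · intro i hi
    simp only [Finset.mem_filter, Finset.mem_univ, true_and] at hi ⊢
    exact hle i hi
  · intro hsub
    apply hne
    funext i
    have h2 : z i = 1 → w i = 1 := by
      intro hz
      have hmem : i ∈ Finset.univ.filter (fun j => z j = 1) := by simp [hz]
      simpa using hsub hmem
    rcases z2 (w i) with hw | hw <;> rcases z2 (z i) with hz | hz
    · rw [hw, hz]
    · exact absurd (h2 hz) (by rw [hw]; decide)
    · exact absurd (hle i hw) (by rw [hz]; decide)
    · rw [hw, hz]

/-- ANF inversion: if all ANF coefficients vanish, the function is zero. -/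
lemma exists_anf_ne_zero {n : ℕ} {f : BF n} (hf : f ≠ 0) : ∃ α, anf f α ≠ 0 := by
  by_contra hc
  push_neg at hc
  apply hf
  funext z
  suffices H : ∀ k (z : Fin n → ZMod 2), wtv z = k → f z = 0 from H _ z rfl
  intro k
  induction k using Nat.strong_induction_on with
  | _ k ih =>
    intro z hz
    have h1 : anf f z = 0 := hc z
    rw [anf] at h1
    have hzmem : z ∈ Finset.univ.filter (fun w : Fin n → ZMod 2 => ∀ i, w i = 1 → z i = 1) := by
      simp
    rw [← Finset.add_sum_erase _ _ hzmem] at h1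
    have hrest : ∀ w ∈ (Finset.univ.filter
        (fun w : Fin n → ZMod 2 => ∀ i, w i = 1 → z i = 1)).erase z, f w = 0 := by
      intro w hw
      obtain ⟨hne, hle⟩ := Finset.mem_erase.mp hw
      simp only [Finset.mem_filter, Finset.mem_univ, true_and] at hle
      exact ih (wtv w) (hz ▸ wtv_lt_of_le_of_ne hle hne) w rfl
    rw [Finset.sum_eq_zero hrest, add_zero] at h1
    exact h1

lemma append_proj {m : ℕ} (u : Fin (m + m) → ZMod 2) :
    Fin.append (fun i => u (Fin.castAdd m i)) (fun i => u (Fin.natAdd m i)) = u := by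
  funext j
  refine Fin.addCases (fun i => ?_) (fun i => ?_) j
  · rw [Fin.append_left]
  · rw [Fin.append_right]

lemma le_append_iff {m : ℕ} {x y α ω : Fin m → ZMod 2} :
    (∀ j, Fin.append x y j = 1 → Fin.append α ω j = 1) ↔
      ((∀ i, x i = 1 → α i = 1) ∧ (∀ i, y i = 1 → ω i = 1)) := by
  constructor
  · intro H
    constructor
    · intro i hi
      have := H (Fin.castAdd m i) (by rwa [Fin.append_left])
      rwa [Fin.append_left] at this
    · intro i hi
      have := H (Fin.natAdd m i) (by rwa [Fin.append_right])
      rwa [Fin.append_right] at this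
  · rintro ⟨h1, h2⟩ j
    refine Fin.addCases (fun i => ?_) (fun i => ?_) j <;>
      simp only [Fin.append_left, Fin.append_right]
    · exact h1 i
    · exact h2 i

lemma wtv_append {m : ℕ} (α ω : Fin m → ZMod 2) :
    wtv (Fin.append α ω) = wtv α + wtv ω := by
  simp only [wtv, Finset.card_filter]
  rw [Fin.sum_univ_add]
  congr 1 <;> apply Finset.sum_congr rfl <;> intro i _
  · rw [Fin.append_left]
  · rw [Fin.append_right]

/-- coefficient function g_ω(x) -/
def coefY {m : ℕ} (g : BF (m + m)) (ω : Fin m → ZMod 2) : BF m :=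
  fun x => anf (fun y => g (Fin.append x y)) ω

lemma anf_append {m : ℕ} (g : BF (m + m)) (α ω : Fin m → ZMod 2) :
    anf g (Fin.append α ω) = anf (coefY g ω) α := by
  simp only [anf, coefY]
  rw [← Finset.sum_product']
  apply Finset.sum_nbij' (fun u => (fun i => u (Fin.castAdd m i), fun i => u (Fin.natAdd m i)))
    (fun p => Fin.append p.1 p.2)
  · intro u hu
    simp only [Finset.mem_filter, Finset.mem_univ, true_and] at hu
    simp only [Finset.mem_product, Finset.mem_filter, Finset.mem_univ, true_and]
    rw [← append_proj u] at hu
    exact le_append_iff.mp hu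
  · intro p hp
    simp only [Finset.mem_product, Finset.mem_filter, Finset.mem_univ, true_and] at hp
    simp only [Finset.mem_filter, Finset.mem_univ, true_and]
    exact le_append_iff.mpr hp
  · intro u _
    exact append_proj u
  · intro p _
    refine Prod.ext ?_ ?_ <;> funext i
    · exact Fin.append_left _ _ i
    · exact Fin.append_right _ _ i
  · intro u _
    rw [append_proj u]

lemma z2' : ∀ a b : ZMod 2, a + b = 0 → a = b := by decide
lemma z2'' : ∀ a b : ZMod 2, a = b → a + b = 0 := by decide

lemma wtv_update_lt {m : ℕ} {ω : Fin m → ZMod 2} {i : Fin m} (hi : ω i = 1) :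
    wtv (Function.update ω i 0) < wtv ω := by
  have hset : Finset.univ.filter (fun j => Function.update ω i 0 j = 1)
      = (Finset.univ.filter (fun j => ω j = 1)).erase i := by
    ext j
    simp only [Finset.mem_filter, Finset.mem_univ, true_and, Finset.mem_erase]
    rcases eq_or_ne j i with rfl | hne
    · simp [Function.update_self]
    · simp [Function.update_of_ne hne, hne]
  rw [wtv, wtv, hset]
  exact Finset.card_erase_lt_of_mem (by simp [hi])

lemma key_step {m : ℕ} (g : BF (m + m)) (ω : Fin m → ZMod 2)
    (hmin : ∀ i, ω i = 1 → coefY g (Function.update ω i 0) = 0)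
    (a : Fin m → ZMod 2) (c : ZMod 2) (x : Fin m → ZMod 2)
    (hax : ∀ y, g (Fin.append x y) * (ip a y + c) = 0) :
    coefY g ω x * (ip ω a + c) = 0 := by
  set q : BF m := fun y => g (Fin.append x y) with hq
  set S : Finset (Fin m → ZMod 2) :=
    Finset.univ.filter (fun y : Fin m → ZMod 2 => ∀ i, y i = 1 → ω i = 1) with hS
  have hCdef : coefY g ω x = ∑ y ∈ S, q y := rfl
  set C : ZMod 2 := coefY g ω x with hC
  -- pointwise: q y * ip a y = q y * c
  have h1 : ∀ y, q y * ip a y = q y * c := by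
    intro y
    apply z2'
    rw [← mul_add]
    exact hax y
  -- the T i values
  have hT : ∀ i, (∑ y ∈ S, q y * y i) = if ω i = 1 then C else 0 := by
    intro i
    rcases z2 (ω i) with hωi | hωi
    · rw [if_neg (by rw [hωi]; decide)]
      apply Finset.sum_eq_zero
      intro y hy
      simp only [hS, Finset.mem_filter, Finset.mem_univ, true_and] at hy
      rcases z2 (y i) with hyi | hyi
      · rw [hyi, mul_zero]
      · exact absurd (hy i hyi) (by rw [hωi]; decide)
    · rw [if_pos hωi]
      have hsplit := Finset.sum_filter_add_sum_filter_not S (fun y => y i = 1) q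
      have hT1 : (∑ y ∈ S, q y * y i) = ∑ y ∈ S.filter (fun y => y i = 1), q y := by
        conv_rhs => rw [Finset.sum_filter]
        apply Finset.sum_congr rfl
        intro y _
        rcases z2 (y i) with hyi | hyi
        · rw [hyi, mul_zero, if_neg (by decide)]
        · rw [hyi, mul_one, if_pos rfl]
      have hT2 : (∑ y ∈ S.filter (fun y => ¬ y i = 1), q y) = 0 := by
        have hfe : S.filter (fun y => ¬ y i = 1) =
            Finset.univ.filter
              (fun y : Fin m → ZMod 2 => ∀ j, y j = 1 → Function.update ω i 0 j = 1) := by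
          ext y
          simp only [hS, Finset.mem_filter, Finset.mem_univ, true_and]
          constructor
          · rintro ⟨hle, hyi⟩ j hj
            rcases eq_or_ne j i with rfl | hne
            · exact absurd hj hyi
            · rw [Function.update_of_ne hne]; exact hle j hj
          · intro H
            constructor
            · intro j hj
              rcases eq_or_ne j i with rfl | hne
              · exact hωi
              · have := H j hj; rwa [Function.update_of_ne hne] at this
            · intro hyi
              have := H i hyi
              rw [Function.update_self] at this
              exact absurd this (by decide)
        rw [hfe]
        have := congrFun (hmin i hωi) x
        simpa [coefY, anf] using this
      rw [hT2, add_zero] at hsplit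
      rw [hT1, hsplit, ← hCdef]
  -- main computation
  have hmain : (∑ y ∈ S, q y * ip a y) = C * c := by
    rw [hCdef, Finset.sum_mul]
    apply Finset.sum_congr rfl
    intro y _
    exact h1 y
  have hswap : (∑ y ∈ S, q y * ip a y) = ip ω a * C := by
    have e1 : ∀ y, q y * ip a y = ∑ i, a i * (q y * y i) := by
      intro y
      rw [ip, Finset.mul_sum]
      apply Finset.sum_congr rfl
      intro i _
      ring
    calc (∑ y ∈ S, q y * ip a y) = ∑ y ∈ S, ∑ i, a i * (q y * y i) := by
          exact Finset.sum_congr rfl fun y _ => e1 y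
      _ = ∑ i, ∑ y ∈ S, a i * (q y * y i) := Finset.sum_comm
      _ = ∑ i, a i * ∑ y ∈ S, q y * y i := by
          exact Finset.sum_congr rfl fun i _ => (Finset.mul_sum _ _ _).symm
      _ = ∑ i, a i * (if ω i = 1 then C else 0) := by
          exact Finset.sum_congr rfl fun i _ => by rw [hT i]
      _ = ∑ i, (ω i * a i) * C := by
          apply Finset.sum_congr rfl
          intro i _
          rcases z2 (ω i) with hωi | hωi
          · rw [hωi, if_neg (by decide), mul_zero, zero_mul, zero_mul]
          · rw [hωi, if_pos rfl, one_mul]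
      _ = (∑ i, ω i * a i) * C := (Finset.sum_mul _ _ _).symm
      _ = ip ω a * C := by rw [ip]
  have hfin : ip ω a * C = C * c := by rw [← hswap, hmain]
  rw [mul_add]
  have : C * ip ω a = C * c := by rw [mul_comm C (ip ω a)]; exact hfin
  rw [this]
  exact z2'' _ _ rfl

lemma MM_append {m : ℕ} (π : (Fin m → ZMod 2) → (Fin m → ZMod 2)) (h : BF m)
    (x y : Fin m → ZMod 2) :
    MM m π h (Fin.append x y) = ip (π x) y + h x := by
  have hx : (fun i => Fin.append x y (Fin.castAdd m i)) = x :=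
    funext fun i => Fin.append_left x y i
  have hy : (fun i => Fin.append x y (Fin.natAdd m i)) = y :=
    funext fun i => Fin.append_right x y i
  simp only [MM, hx, hy]

lemma main_bound {m : ℕ} (π : (Fin m → ZMod 2) → (Fin m → ZMod 2)) (h : BF m)
    (g : BF (m + m)) (hg : g ≠ 0)
    (hann : (∀ u, g u * MM m π h u = 0) ∨ (∀ u, g u * (1 + MM m π h u) = 0)) :
    ∃ ω : Fin m → ZMod 2, wtv ω + AI (fun x => ip ω (π x) + h x) ≤ degBF g := by
  have hex : ∃ ω, coefY g ω ≠ 0 := by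
    obtain ⟨u, hu⟩ := Function.ne_iff.mp hg
    have hq : (fun y => g (Fin.append (fun i => u (Fin.castAdd m i)) y)) ≠ 0 := by
      intro h0
      apply hu
      have := congrFun h0 (fun i => u (Fin.natAdd m i))
      rwa [append_proj] at this
    obtain ⟨ω, hω⟩ := exists_anf_ne_zero hq
    exact ⟨ω, fun h0 => hω (congrFun h0 (fun i => u (Fin.castAdd m i)))⟩
  obtain ⟨ω0, hω0⟩ := hex
  set N : Set ℕ := {n | ∃ ω, coefY g ω ≠ 0 ∧ wtv ω = n} with hNdef
  have hNne : N.Nonempty := ⟨wtv ω0, ω0, hω0, rfl⟩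
  obtain ⟨ω, hωne, hωwt⟩ := Nat.sInf_mem hNne
  have hminwt : ∀ ω', wtv ω' < wtv ω → coefY g ω' = 0 := by
    intro ω' hlt
    by_contra h0
    have hmem : wtv ω' ∈ N := ⟨ω', h0, rfl⟩
    have := Nat.sInf_le hmem
    omega
  have hmin : ∀ i, ω i = 1 → coefY g (Function.update ω i 0) = 0 :=
    fun i hi => hminwt _ (wtv_update_lt hi)
  refine ⟨ω, ?_⟩
  have hannω : (∀ x, coefY g ω x * (ip ω (π x) + h x) = 0) ∨
      (∀ x, coefY g ω x * (1 + (ip ω (π x) + h x)) = 0) := by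
    rcases hann with H | H
    · left
      intro x
      exact key_step g ω hmin (π x) (h x) x (fun y => by
        have := H (Fin.append x y); rwa [MM_append] at this)
    · right
      intro x
      have hax : ∀ y, g (Fin.append x y) * (ip (π x) y + (1 + h x)) = 0 := by
        intro y
        have hH := H (Fin.append x y)
        rw [MM_append] at hH
        calc g (Fin.append x y) * (ip (π x) y + (1 + h x))
            = g (Fin.append x y) * (1 + (ip (π x) y + h x)) := by ring
          _ = 0 := hH
      have hk := key_step g ω hmin (π x) (1 + h x) x hax
      calc coefY g ω x * (1 + (ip ω (π x) + h x))
          = coefY g ω x * (ip ω (π x) + (1 + h x)) := by ring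
        _ = 0 := hk
  have hAI : AI (fun x => ip ω (π x) + h x) ≤ degBF (coefY g ω) := by
    apply Nat.sInf_le
    exact ⟨coefY g ω, hωne, rfl, hannω⟩
  have hdeg : wtv ω + degBF (coefY g ω) ≤ degBF g := by
    obtain ⟨α, hα⟩ := exists_anf_ne_zero hωne
    have hsetne : (Finset.univ.filter fun β => anf (coefY g ω) β ≠ 0).Nonempty :=
      ⟨α, by simp [hα]⟩
    obtain ⟨β, hβmem, hβ⟩ := Finset.exists_mem_eq_sup _ hsetne wtv
    simp only [Finset.mem_filter, Finset.mem_univ, true_and] at hβmem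
    have hne : anf g (Fin.append β ω) ≠ 0 := by
      rw [anf_append]; exact hβmem
    have hle : wtv (Fin.append β ω) ≤ degBF g :=
      Finset.le_sup (by simp [hne])
    rw [wtv_append] at hle
    rw [degBF, hβ]
    omega
  omega

/-- Any nonzero annihilator g of MM_{2m} or of its complement has
deg g ≥ wt(ω*) + AI(⟨ω*,π(X)⟩ ⊕ h(X)) for some ω*; consequently the same lower
bound holds for AI(MM_{2m}). -/
theorem AI_MM_lower (m : ℕ) (hm : 1 ≤ m)
    (π : (Fin m → ZMod 2) → (Fin m → ZMod 2)) (hπ : Function.Bijective π) (h : BF m)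
    (g : BF (m + m)) (hg : g ≠ 0)
    (hann : (∀ u, g u * MM m π h u = 0) ∨ (∀ u, g u * (1 + MM m π h u) = 0)) :
    (∃ ω : Fin m → ZMod 2,
        wtv ω + AI (fun x => ip ω (π x) + h x) ≤ degBF g) ∧
    (∃ ω : Fin m → ZMod 2,
        wtv ω + AI (fun x => ip ω (π x) + h x) ≤ AI (MM m π h)) := by
  refine ⟨main_bound π h g hg hann, ?_⟩
  have hne : {d : ℕ | ∃ g' : BF (m + m), g' ≠ 0 ∧ degBF g' = d ∧
      ((∀ x, g' x * MM m π h x = 0) ∨ (∀ x, g' x * (1 + MM m π h x) = 0))}.Nonempty :=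
    ⟨degBF g, g, hg, rfl, hann⟩
  obtain ⟨g', hg', hdeg', hann'⟩ := Nat.sInf_mem hne
  obtain ⟨ω, hω⟩ := main_bound π h g' hg' hann'
  refine ⟨ω, ?_⟩
  have hAIeq : AI (MM m π h) = degBF g' := by
    rw [AI, ← hdeg']
  rw [hAIeq]
  exact hω
end

section
/- Let f be an n-variable Boolean function and define h(W,Z) = W ⊕ f(Z) on n+1 variables. Then AI(f) ≤ AI(h) ≤ 1 + AI(f). -/
/-- The (n+1)-variable function h(W,Z) = W ⊕ f(Z). -/
def addVar {n : ℕ} (f : BF n) : BF (n + 1) :=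
  fun u => u 0 + f (fun i => u i.succ)

/-!
Split a function on `n + 1` variables as `G(W, Z) = G(0, Z) ⊕ W · (G(0, Z) ⊕ G(1, Z))`; both
subfunctions `G(0, ·)` and `G(1, ·)` have degree at most `deg G`. If `G ≠ 0` annihilates
`c ⊕ W ⊕ f(Z)`, then each `G(b, ·)` annihilates `(c ⊕ b) ⊕ f` and one of them is nonzero, so
`AI f ≤ AI h`. Conversely, an annihilator `g` of `c ⊕ f` lifts to the annihilator
`(1 ⊕ c ⊕ W) · g(Z)` of `h`, whose degree is at most `1 + deg g`.
-/

variable {n : ℕ}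

lemma zmod_two_eq_zero_or_one (a : ZMod 2) : a = 0 ∨ a = 1 := by
  revert a; decide

lemma sum_zmod_two {M : Type*} [AddCommMonoid M] (F : ZMod 2 → M) : ∑ b, F b = F 0 + F 1 :=
  Fin.sum_univ_two F

def subfun (G : BF (n + 1)) (b : ZMod 2) : BF n := fun z => G (Fin.cons b z)

lemma wtv_cons (b : ZMod 2) (α : Fin n → ZMod 2) :
    wtv (Fin.cons b α : Fin (n + 1) → ZMod 2) = (if b = 1 then 1 else 0) + wtv α := by
  simp only [wtv, Finset.card_filter, Fin.sum_univ_succ, Fin.cons_zero, Fin.cons_succ]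

lemma wtv_le_wtv_cons (b : ZMod 2) (α : Fin n → ZMod 2) :
    wtv α ≤ wtv (Fin.cons b α : Fin (n + 1) → ZMod 2) := by
  rw [wtv_cons]; omega

lemma wtv_cons_le (b : ZMod 2) (α : Fin n → ZMod 2) :
    wtv (Fin.cons b α : Fin (n + 1) → ZMod 2) ≤ 1 + wtv α := by
  rw [wtv_cons]; split_ifs <;> omega

lemma anf_eq_sum (f : BF n) (α : Fin n → ZMod 2) :
    anf f α = ∑ z, if ∀ i, z i = 1 → α i = 1 then f z else 0 :=
  Finset.sum_filter _ _

lemma anf_const_mul (c : ZMod 2) (f : BF n) (α : Fin n → ZMod 2) :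
    anf (fun z => c * f z) α = c * anf f α := by
  rw [anf, anf, Finset.mul_sum]

-- The ANF form of `G(W, Z) = G(0, Z) ⊕ W · (G(0, Z) ⊕ G(1, Z))`.
lemma anf_cons (G : BF (n + 1)) (w : ZMod 2) (α : Fin n → ZMod 2) :
    anf G (Fin.cons w α) = anf (subfun G 0) α + w * anf (subfun G 1) α := by
  rw [anf_eq_sum, ← (Fin.consEquiv fun _ => ZMod 2).sum_comp, Fintype.sum_prod_type]
  simp only [Fin.consEquiv, Fin.forall_fin_succ, Fin.cons_zero, Fin.cons_succ, subfun,
    anf_eq_sum, sum_zmod_two]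
  obtain rfl | rfl := zmod_two_eq_zero_or_one w <;> simp

lemma degBF_le_of_forall {g : BF n} {d : ℕ} (h : ∀ α, anf g α ≠ 0 → wtv α ≤ d) : degBF g ≤ d :=
  Finset.sup_le fun α hα => h α (Finset.mem_filter.mp hα).2

lemma wtv_le_degBF {g : BF n} {α : Fin n → ZMod 2} (h : anf g α ≠ 0) : wtv α ≤ degBF g :=
  Finset.le_sup (Finset.mem_filter.mpr ⟨Finset.mem_univ _, h⟩)

lemma degBF_subfun_le (G : BF (n + 1)) (b : ZMod 2) : degBF (subfun G b) ≤ degBF G := by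
  refine degBF_le_of_forall fun α hα => ?_
  obtain ⟨w, hw⟩ : ∃ w, anf G (Fin.cons w α) ≠ 0 := by
    by_contra! h
    have h0 := h 0
    have h1 := h 1
    rw [anf_cons] at h0 h1
    obtain rfl | rfl := zmod_two_eq_zero_or_one b <;> simp_all
  exact (wtv_le_wtv_cons w α).trans (wtv_le_degBF hw)

lemma degBF_mul_tail_le (c : ZMod 2 → ZMod 2) (g : BF n) :
    degBF (fun u : Fin (n + 1) → ZMod 2 => c (u 0) * g (Fin.tail u)) ≤ 1 + degBF g := by
  refine degBF_le_of_forall fun α hα => ?_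
  induction α using Fin.consCases with
  | cons w α =>
    have hsub : ∀ b, subfun (fun u => c (u 0) * g (Fin.tail u)) b = fun z => c b * g z :=
      fun _ => rfl
    rw [anf_cons, hsub, hsub, anf_const_mul, anf_const_mul] at hα
    have hg : anf g α ≠ 0 := fun h => hα (by simp [h])
    exact (wtv_cons_le w α).trans (by have := wtv_le_degBF hg; omega)

lemma exists_subfun_ne_zero {G : BF (n + 1)} (hG : G ≠ 0) : ∃ b, subfun G b ≠ 0 := by
  by_contra! h
  refine hG (funext fun u => ?_)
  induction u using Fin.consCases with
  | cons b z => exact congrFun (h b) z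

lemma AI_le_degBF {f g : BF n} (hg : g ≠ 0) (c : ZMod 2) (hc : ∀ x, g x * (c + f x) = 0) :
    AI f ≤ degBF g := by
  refine Nat.sInf_le ⟨g, hg, rfl, ?_⟩
  obtain rfl | rfl := zmod_two_eq_zero_or_one c
  · exact Or.inl fun x => by simpa using hc x
  · exact Or.inr hc

lemma exists_degBF_eq_AI (f : BF n) :
    ∃ g : BF n, g ≠ 0 ∧ degBF g = AI f ∧ ∃ c : ZMod 2, ∀ x, g x * (c + f x) = 0 := by
  have hne : {d : ℕ | ∃ g : BF n, g ≠ 0 ∧ degBF g = d ∧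
      ((∀ x, g x * f x = 0) ∨ (∀ x, g x * (1 + f x) = 0))}.Nonempty := by
    by_cases hf : f = 0
    · refine ⟨_, 1, one_ne_zero, rfl, Or.inl fun x => by simp [hf]⟩
    · refine ⟨_, f, hf, rfl, Or.inr fun x => ?_⟩
      generalize f x = a
      revert a; decide
  obtain ⟨g, hg, hdeg, hann⟩ := Nat.sInf_mem hne
  refine ⟨g, hg, hdeg, ?_⟩
  rcases hann with hann | hann
  · exact ⟨0, fun x => by simpa using hann x⟩
  · exact ⟨1, hann⟩

lemma addVar_cons (f : BF n) (w : ZMod 2) (z : Fin n → ZMod 2) :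
    addVar f (Fin.cons w z) = w + f z := by
  simp [addVar]

lemma subfun_annihilates_of_addVar {f : BF n} {G : BF (n + 1)} {c : ZMod 2}
    (hc : ∀ u, G u * (c + addVar f u) = 0) (b : ZMod 2) :
    ∀ z, subfun G b z * (c + b + f z) = 0 := fun z => by
  simpa only [subfun, addVar_cons, add_assoc] using hc (Fin.cons b z)

-- At `W = 1 ⊕ c` the first factor vanishes; at `W = c` the product is `g · (c ⊕ f)`.
lemma annihilates_addVar_of {f g : BF n} {c : ZMod 2} (hc : ∀ z, g z * (c + f z) = 0) :
    ∀ u, (1 + c + u 0) * g (Fin.tail u) * (0 + addVar f u) = 0 := by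
  have key : ∀ w c y a : ZMod 2, a * (c + y) = 0 → (1 + c + w) * a * (0 + (w + y)) = 0 := by
    decide
  intro u
  induction u using Fin.consCases with
  | cons w z => rw [addVar_cons]; exact key w c (f z) (g z) (hc z)

/-- AI(f) ≤ AI(W ⊕ f(Z)) ≤ 1 + AI(f). -/
theorem AI_addVar {n : ℕ} (f : BF n) :
    AI f ≤ AI (addVar f) ∧ AI (addVar f) ≤ 1 + AI f := by
  constructor
  · obtain ⟨G, hG, hdeg, c, hc⟩ := exists_degBF_eq_AI (addVar f)
    obtain ⟨b, hb⟩ := exists_subfun_ne_zero hG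
    calc AI f ≤ degBF (subfun G b) := AI_le_degBF hb _ (subfun_annihilates_of_addVar hc b)
      _ ≤ AI (addVar f) := hdeg ▸ degBF_subfun_le G b
  · obtain ⟨g, hg, hdeg, c, hc⟩ := exists_degBF_eq_AI f
    have hG : (fun u : Fin (n + 1) → ZMod 2 => (1 + c + u 0) * g (Fin.tail u)) ≠ 0 := by
      refine fun h => hg (funext fun z => ?_)
      simpa [add_assoc, CharTwo.add_self_eq_zero] using congrFun h (Fin.cons c z)
    calc AI (addVar f) ≤ degBF fun u => (1 + c + u 0) * g (Fin.tail u) :=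
          AI_le_degBF hG 0 (annihilates_addVar_of hc)
      _ ≤ 1 + AI f := hdeg ▸ degBF_mul_tail_le _ g
end

section
/- The initialisation round function IR is a bijection on F₂^L, and its inverse is efficiently computable: given w = IR(u), the bits of u are recovered as u_i = w_{i−1} ⊕ d_{i−1}·b for i = L−1,…,1 and u₀ = w_{L−1} ⊕ c ⊕ b, where b and c are determined by w. -/
/-- The linear next-bit map nb(u) = ⊕ cᵢ uᵢ of the LFSR. -/
def nbF (L : ℕ) (cvec : Fin L → ZMod 2) (u : Fin L → ZMod 2) : ZMod 2 :=
  ∑ i, cvec i * u i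

/-- The initialisation round function: clock the LFSR once and XOR the filter
output bit b = filt(u) into the positions where d is 1.  Bit j of the new state
is u_{j+1} + d_j·b for j < L-1, and nb(u) + d_{L-1}·b for the top position. -/
def IR (L : ℕ) (cvec d : Fin L → ZMod 2) (filt : (Fin L → ZMod 2) → ZMod 2) :
    (Fin L → ZMod 2) → (Fin L → ZMod 2) :=
  fun u j =>
    (if hj : (j : ℕ) + 1 < L then u ⟨(j : ℕ) + 1, hj⟩ else nbF L cvec u) + d j * filt u

/-!
With `w = IR u` and `b = filt u`: a filter tap `i + 1` has `d i = 0`, so `u (i + 1) = w i`, and as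
position `0` is no tap, `b` is a function of `w`. Knowing `b`, `u (i + 1) = w i + d i * b`
recovers all of `u` but `u 0`, which comes from the top bit `w (L - 1) = u 0 + c + b`
(using `cvec 0 = 1` and `d (L - 1) = 1`). So `IR` is injective, hence bijective on a finite space.
-/
section IR

variable {L : ℕ} {cvec d : Fin L → ZMod 2} {filt : (Fin L → ZMod 2) → ZMod 2}

theorem IR_apply_of_succ_lt (u : Fin L → ZMod 2) (i : ℕ) (hi : i + 1 < L) :
    IR L cvec d filt u ⟨i, Nat.lt_of_succ_lt hi⟩ =
      u ⟨i + 1, hi⟩ + d ⟨i, Nat.lt_of_succ_lt hi⟩ * filt u := by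
  simp only [IR, dif_pos hi]

theorem IR_apply_last (u : Fin L → ZMod 2) (hL : 0 < L) :
    IR L cvec d filt u ⟨L - 1, Nat.sub_one_lt_of_lt hL⟩ =
      nbF L cvec u + d ⟨L - 1, Nat.sub_one_lt_of_lt hL⟩ * filt u := by
  simp only [IR, dif_neg (show ¬(L - 1 + 1 < L) by omega)]

theorem nbF_eq_add_sum_ne_zero (hL : 0 < L) (hc0 : cvec ⟨0, hL⟩ = 1) (u : Fin L → ZMod 2) :
    nbF L cvec u =
      u ⟨0, hL⟩ + ∑ i ∈ Finset.univ.filter fun i : Fin L => (i : ℕ) ≠ 0, cvec i * u i := by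
  rw [nbF, ← Finset.sum_filter_not_add_sum_filter _ (fun i : Fin L => (i : ℕ) ≠ 0)]
  congr 1
  have hzero : (Finset.univ.filter fun i : Fin L => ¬(i : ℕ) ≠ 0) = {⟨0, hL⟩} := by
    ext i
    simp [Fin.ext_iff]
  rw [hzero, Finset.sum_singleton, hc0, one_mul]

theorem eq_IR_add_of_succ_lt (u : Fin L → ZMod 2) (i : ℕ) (hi : i + 1 < L) :
    u ⟨i + 1, hi⟩ =
      IR L cvec d filt u ⟨i, Nat.lt_of_succ_lt hi⟩ + d ⟨i, Nat.lt_of_succ_lt hi⟩ * filt u := by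
  rw [IR_apply_of_succ_lt, CharTwo.add_cancel_right]

theorem eq_IR_last_add (hL : 0 < L) (hc0 : cvec ⟨0, hL⟩ = 1)
    (hdtop : d ⟨L - 1, Nat.sub_one_lt_of_lt hL⟩ = 1) (u : Fin L → ZMod 2) :
    u ⟨0, hL⟩ = IR L cvec d filt u ⟨L - 1, Nat.sub_one_lt_of_lt hL⟩
      + (∑ i ∈ Finset.univ.filter fun i : Fin L => (i : ℕ) ≠ 0, cvec i * u i) + filt u := by
  rw [IR_apply_last u hL, hdtop, one_mul, nbF_eq_add_sum_ne_zero hL hc0,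
    add_right_comm (u ⟨0, hL⟩ + _) (filt u), CharTwo.add_cancel_right, CharTwo.add_cancel_right]

theorem eq_IR_of_succ_mem_taps {taps : Finset (Fin L)}
    (hdtap : ∀ (i : ℕ) (hi : i + 1 < L),
      (⟨i + 1, hi⟩ : Fin L) ∈ taps → d ⟨i, Nat.lt_of_succ_lt hi⟩ = 0)
    (u : Fin L → ZMod 2) (i : ℕ) (hi : i + 1 < L) (hmem : (⟨i + 1, hi⟩ : Fin L) ∈ taps) :
    u ⟨i + 1, hi⟩ = IR L cvec d filt u ⟨i, Nat.lt_of_succ_lt hi⟩ := by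
  rw [eq_IR_add_of_succ_lt (cvec := cvec) (d := d) (filt := filt) u i hi, hdtap i hi hmem,
    zero_mul, add_zero]

theorem filt_eq_of_IR_eq {taps : Finset (Fin L)}
    (hfilt : ∀ u v : Fin L → ZMod 2, (∀ i ∈ taps, u i = v i) → filt u = filt v)
    (hL : 0 < L) (h0tap : (⟨0, hL⟩ : Fin L) ∉ taps)
    (hdtap : ∀ (i : ℕ) (hi : i + 1 < L),
      (⟨i + 1, hi⟩ : Fin L) ∈ taps → d ⟨i, Nat.lt_of_succ_lt hi⟩ = 0)
    {u v : Fin L → ZMod 2} (huv : IR L cvec d filt u = IR L cvec d filt v) :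
    filt u = filt v := by
  refine hfilt u v fun i hi => ?_
  rcases i with ⟨_ | j, hj⟩
  · exact absurd hi h0tap
  · rw [eq_IR_of_succ_mem_taps hdtap u j hj hi, eq_IR_of_succ_mem_taps hdtap v j hj hi, huv]

end IR

/-- The initialisation round function IR is a bijection on F₂^L, and its inverse is
given explicitly: from w = IR(u), one recovers u_i = w_{i-1} ⊕ d_{i-1}·b for
i = L-1,…,1 and u₀ = w_{L-1} ⊕ c ⊕ b, where b = filt(u) and c = ⊕_{i≥1} cᵢuᵢ. -/
theorem IR_bijective (L : ℕ) (hL : 0 < L) (cvec d : Fin L → ZMod 2)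
    (taps : Finset (Fin L)) (filt : (Fin L → ZMod 2) → ZMod 2)
    (hfilt : ∀ u v : Fin L → ZMod 2, (∀ i ∈ taps, u i = v i) → filt u = filt v)
    (hc0 : cvec ⟨0, hL⟩ = 1)
    (h0tap : (⟨0, hL⟩ : Fin L) ∉ taps)
    (hdtop : d ⟨L - 1, by omega⟩ = 1)
    (hdtap : ∀ (i : ℕ) (hi : i + 1 < L),
      (cvec ⟨i + 1, hi⟩ = 1 ∨ (⟨i + 1, hi⟩ : Fin L) ∈ taps) →
        d ⟨i, by omega⟩ = 0) :
    Function.Bijective (IR L cvec d filt) ∧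
    ∀ u : Fin L → ZMod 2,
      (∀ (i : ℕ) (hi : i + 1 < L),
        u ⟨i + 1, hi⟩ = IR L cvec d filt u ⟨i, by omega⟩ + d ⟨i, by omega⟩ * filt u) ∧
      u ⟨0, hL⟩ = IR L cvec d filt u ⟨L - 1, by omega⟩
        + (∑ i ∈ Finset.univ.filter fun i : Fin L => (i : ℕ) ≠ 0, cvec i * u i)
        + filt u := by
  refine ⟨Finite.injective_iff_bijective.mp fun u v huv => ?_,
    fun u => ⟨eq_IR_add_of_succ_lt u, eq_IR_last_add hL hc0 hdtop u⟩⟩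
  have hb : filt u = filt v :=
    filt_eq_of_IR_eq hfilt hL h0tap (fun i hi h => hdtap i hi (Or.inr h)) huv
  have hsucc : ∀ (i : ℕ) (hi : i + 1 < L), u ⟨i + 1, hi⟩ = v ⟨i + 1, hi⟩ := fun i hi => by
    rw [eq_IR_add_of_succ_lt u i hi, eq_IR_add_of_succ_lt v i hi, huv, hb]
  have hpos : ∀ i : Fin L, (i : ℕ) ≠ 0 → u i = v i := fun ⟨i, hi⟩ hi0 => by
    obtain ⟨j, rfl⟩ := Nat.exists_eq_succ_of_ne_zero hi0
    exact hsucc j hi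
  funext i
  rcases i with ⟨_ | j, hj⟩
  · rw [eq_IR_last_add hL hc0 hdtop u, eq_IR_last_add hL hc0 hdtop v, huv, hb,
      Finset.sum_congr rfl fun i hi => by rw [hpos i (Finset.mem_filter.mp hi).2]]
  · exact hsucc j hj
end

section
/- Let 0 ≤ t₁ < t₂ and let tap positions satisfy 0 = i₁ < i₂ < ⋯ < i_m < κ ≤ j₁ < j₂ < ⋯ < j_m. Define qterm(t,p) = {L+t−1−i_p, L+t−1−j_{m+1−p}}. Then for all 1 ≤ p, p′ ≤ m, qterm(t₁,p) ≠ qterm(t₂,p′); i.e., no quadratic term cancellation occurs between shifted states. -/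
/-! A quadratic term is a pair whose larger entry comes from an `X`-tap and whose smaller entry
comes from a `Y`-tap, since all `X`-taps precede all `Y`-taps. Two coinciding terms at times
`t₁ < t₂` must therefore match entry by entry, which shifts both taps up by `t₂ - t₁`:
`i p < i p'` forces `p < p'`, while `j p.rev < j p'.rev` forces `p' < p`. -/

/-- The 2-element index set {L+t−1−i_p, L+t−1−j_{m+1−p}} defining the p-th
quadratic term of the state at time t. -/
def qterm (L t : ℕ) {m : ℕ} (i j : Fin m → ℕ) (p : Fin m) : Finset ℕ :=
  {L + t - 1 - i p, L + t - 1 - j p.rev}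

theorem Finset.eq_and_eq_of_pair_eq_pair {α : Type*} [LinearOrder α] {a b c d : α}
    (hba : b < a) (hdc : d < c) (h : ({a, b} : Finset α) = {c, d}) : a = c ∧ b = d := by
  have hset : ({a, b} : Set α) = {c, d} := by simpa using congrArg ((↑) : Finset α → Set α) h
  rcases Set.pair_eq_pair_iff.mp hset with hac | ⟨rfl, rfl⟩
  · exact hac
  · exact absurd (hba.trans hdc) (lt_irrefl b)

theorem StrictMono.apply_rev_lt_of_lt {α β : Type*} [LinearOrder α] [Preorder β] {m : ℕ}
    {i : Fin m → α} {j : Fin m → β} (hi : StrictMono i) (hj : StrictMono j) {p p' : Fin m}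
    (h : i p < i p') : j p'.rev < j p.rev :=
  hj (Fin.rev_lt_rev.mpr (hi.lt_iff_lt.mp h))

theorem no_quadratic_cancellation_general (L κ m t₁ t₂ : ℕ)
    (i j : Fin m → ℕ) (hi : StrictMono i) (hj : StrictMono j)
    (hiκ : ∀ p, i p < κ)
    (hjκ : ∀ p, κ ≤ j p) (hjtop : ∀ p, j p ≤ 2 * κ - 2)
    (hL : 2 * κ ≤ L) (ht : t₁ < t₂) (p p' : Fin m) :
    qterm L t₁ i j p ≠ qterm L t₂ i j p' := by
  intro h
  -- No subtraction below truncates: `L + t - 1 ≥ 2 * κ - 1` exceeds every tap position.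
  have hYX : ∀ t q, L + t - 1 - j q.rev < L + t - 1 - i q := fun t q => by
    have := hiκ q; have := hjκ q.rev; omega
  obtain ⟨hX, hY⟩ := Finset.eq_and_eq_of_pair_eq_pair (hYX t₁ p) (hYX t₂ p') h
  have hip := hiκ p
  have hjp := hjtop p.rev
  have hshiftX : i p < i p' := by omega
  have hshiftY : j p.rev < j p'.rev := by omega
  exact lt_asymm hshiftY (hi.apply_rev_lt_of_lt hj hshiftX)

/-- With tap positions 0 = i₁ < i₂ < ⋯ < i_m < κ ≤ j₁ < j₂ < ⋯ < j_m (= 2κ−2),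
no quadratic term at time t₁ coincides with a quadratic term at a later time t₂:
for all p, p′, qterm(t₁,p) ≠ qterm(t₂,p′). -/
theorem no_quadratic_cancellation (L κ m t₁ t₂ : ℕ) (hm : 0 < m)
    (i j : Fin m → ℕ) (hi : StrictMono i) (hj : StrictMono j)
    (hi1 : i ⟨0, hm⟩ = 0) (hiκ : ∀ p, i p < κ)
    (hjκ : ∀ p, κ ≤ j p) (hjtop : ∀ p, j p ≤ 2 * κ - 2)
    (hL : 2 * κ ≤ L) (ht : t₁ < t₂) (p p' : Fin m) :
    qterm L t₁ i j p ≠ qterm L t₂ i j p' :=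
  no_quadratic_cancellation_general L κ m t₁ t₂ i j hi hj hiκ hjκ hjtop hL ht p p'
end
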